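/- arXiv:1303.6576 — 6 statements merged into one kernel-verified Lean document; each statement's English description precedes it below -/
import Mathlib

section
/- Every complete magnitude space is Archimedean: if M is a magnitude space in which every nonempty subset with an upper bound has a least upper bound, then for any a ∈ M and any nonempty subset A with an upper bound, there exists ζ ∈ A with ζ + a ∉ A. -/
/-- A magnitude space: nonempty, associative, commutative `+` with trichotomy. -/
class MagnitudeSpace (M : Type*) extends Add M where
  nonempty : Nonempty M
  add_assoc' : ∀ a b c : M, a + (b + c) = (a + b) + c
  add_comm' : ∀ a b : M, a + b = b + a
  trichotomy : ∀ a b : M,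
    ((∃ d, a = b + d) ∧ a ≠ b ∧ ¬ (∃ d, b = a + d)) ∨
    (¬ (∃ d, a = b + d) ∧ a = b ∧ ¬ (∃ d, b = a + d)) ∨
    (¬ (∃ d, a = b + d) ∧ a ≠ b ∧ (∃ d, b = a + d))

variable {M : Type*}

/-- `a` is less than `b` iff `b = a + d` for some `d`. -/
def mlt [MagnitudeSpace M] (a b : M) : Prop := ∃ d, b = a + d

/-- `a ≤ b` iff `a < b` or `a = b`. -/
def mle [MagnitudeSpace M] (a b : M) : Prop := mlt a b ∨ a = b

/-- `nsm n a` is the `(n+1)`-fold sum of `a`; as `n` ranges over `ℕ` this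
gives exactly the positive integral multiples of `a`. -/
def nsm [MagnitudeSpace M] : ℕ → M → M
  | 0, a => a
  | n + 1, a => nsm n a + a

lemma mlt_irrefl [MagnitudeSpace M] (a : M) : ¬ mlt a a := by
  rcases MagnitudeSpace.trichotomy a a with ⟨_, hne, _⟩ | ⟨_, _, h⟩ | ⟨_, hne, _⟩
  · exact absurd rfl hne
  · exact h
  · exact absurd rfl hne

lemma mlt_trans [MagnitudeSpace M] {a b c : M} (h1 : mlt a b) (h2 : mlt b c) :
    mlt a c := by
  obtain ⟨d, hd⟩ := h1
  obtain ⟨e, he⟩ := h2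
  exact ⟨d + e, by rw [he, hd, MagnitudeSpace.add_assoc']⟩

lemma mlt_add [MagnitudeSpace M] (a d : M) : mlt a (a + d) := ⟨d, rfl⟩

lemma mlt_add_right [MagnitudeSpace M] {a b : M} (c : M) (h : mlt a b) :
    mlt (a + c) (b + c) := by
  obtain ⟨d, hd⟩ := h
  refine ⟨d, ?_⟩
  rw [hd]
  rw [← MagnitudeSpace.add_assoc', ← MagnitudeSpace.add_assoc',
    MagnitudeSpace.add_comm' d c]

lemma not_mle_of_mlt [MagnitudeSpace M] {a b : M} (h : mlt a b) : ¬ mle b a := by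
  rintro (h' | h')
  · exact mlt_irrefl a (mlt_trans h h')
  · exact mlt_irrefl a (h' ▸ h)

lemma mlt_of_not_mle [MagnitudeSpace M] {a b : M} (h : ¬ mle a b) : mlt b a := by
  rcases MagnitudeSpace.trichotomy a b with ⟨h1, _, _⟩ | ⟨_, h2, _⟩ | ⟨_, _, h3⟩
  · exact h1
  · exact absurd (Or.inr h2) h
  · exact absurd (Or.inl h3) h

theorem stmt_7 [MagnitudeSpace M]
    (hcomp : ∀ A : Set M, A.Nonempty → (∃ u : M, ∀ x ∈ A, mle x u) →
      ∃ l : M, (∀ x ∈ A, mle x l) ∧ ∀ u : M, (∀ x ∈ A, mle x u) → mle l u) :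
    ∀ (a : M) (A : Set M), A.Nonempty → (∃ u : M, ∀ x ∈ A, mle x u) →
      ∃ ζ ∈ A, ζ + a ∉ A := by
  intro a A hne hub
  by_contra h
  push_neg at h
  have hmem : ∀ ζ ∈ A, ζ + a ∈ A := h
  obtain ⟨l, hl_ub, hl_least⟩ := hcomp A hne hub
  -- a < l
  obtain ⟨ζ₀, hζ₀⟩ := hne
  have h1 : mle (ζ₀ + a) l := hl_ub _ (hmem ζ₀ hζ₀)
  have h2 : mlt a (ζ₀ + a) := by
    rw [MagnitudeSpace.add_comm']
    exact mlt_add a ζ₀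
  have hal : mlt a l := by
    rcases h1 with h1 | h1
    · exact mlt_trans h2 h1
    · rwa [h1] at h2
  obtain ⟨c, hc⟩ := hal  -- l = a + c
  have hcl : mlt c l := ⟨a, by rw [hc, MagnitudeSpace.add_comm']⟩
  -- c is not an upper bound of A
  have : ¬ ∀ x ∈ A, mle x c := by
    intro hcub
    exact not_mle_of_mlt hcl (hl_least c hcub)
  push_neg at this
  obtain ⟨ζ, hζA, hζc⟩ := this
  have hcζ : mlt c ζ := mlt_of_not_mle hζc
  have hlζa : mlt l (ζ + a) := by
    have := mlt_add_right a hcζ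
    rwa [show c + a = l by rw [hc, MagnitudeSpace.add_comm']] at this
  exact not_mle_of_mlt hlζa (hl_ub _ (hmem ζ hζA))
end

section
/- A discrete Archimedean magnitude space is well ordered: if a magnitude space M has a smallest element and is Archimedean, then every nonempty subset of M has a smallest element. -/
variable {M : Type*}

theorem stmt_8 [MagnitudeSpace M]
    (hdisc : ∃ e : M, ∀ x : M, mle e x)
    (harch : ∀ (a : M) (A : Set M), A.Nonempty → (∃ u : M, ∀ x ∈ A, mle x u) →
      ∃ ζ ∈ A, ζ + a ∉ A) :
    ∀ A : Set M, A.Nonempty → ∃ b ∈ A, ∀ x ∈ A, mle b x := by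
  intro A hA
  obtain ⟨e, he⟩ := hdisc
  obtain ⟨a, ha⟩ := hA
  have hB : Set.Nonempty {x | ∀ y ∈ A, mle x y} := ⟨e, fun y _ => he y⟩
  have hub : ∃ u, ∀ x ∈ {x | ∀ y ∈ A, mle x y}, mle x u :=
    ⟨a, fun x hx => hx a ha⟩
  obtain ⟨ζ, hζB, hζe⟩ := harch e _ hB hub
  by_cases hζA : ζ ∈ A
  · exact ⟨ζ, hζA, hζB⟩
  · exfalso
    apply hζe
    intro y hy
    have h1 : mlt ζ y := by
      rcases hζB y hy with h | h
      · exact h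
      · exact absurd (h ▸ hy) hζA
    obtain ⟨d, hd⟩ := h1
    rcases he d with ⟨d', hd'⟩ | hed
    · exact Or.inl ⟨d', by rw [hd, hd', MagnitudeSpace.add_assoc']⟩
    · exact Or.inr (by rw [hd, ← hed])
end

section
/- Induction principle for well ordered magnitude spaces: if M is a well ordered magnitude space with smallest element a, and A ⊆ M contains a and is closed under adding a (c ∈ A implies c + a ∈ A), then A = M. -/
variable {M : Type*}

theorem stmt_10 [MagnitudeSpace M]
    (hwo : ∀ A : Set M, A.Nonempty → ∃ b ∈ A, ∀ x ∈ A, mle b x)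
    (a : M) (ha : ∀ x : M, mle a x)
    (A : Set M) (haA : a ∈ A) (hclosed : ∀ c ∈ A, c + a ∈ A) :
    A = Set.univ := by
  by_contra hne
  have hcomp : (Aᶜ : Set M).Nonempty := by
    rcases Set.nonempty_compl.mpr hne with ⟨x, hx⟩
    exact ⟨x, hx⟩
  obtain ⟨b, hbA, hbmin⟩ := hwo Aᶜ hcomp
  have hab : mlt a b := by
    rcases ha b with h | h
    · exact h
    · exact absurd (h ▸ hbA) (fun h' => h' haA)
  obtain ⟨d, hd⟩ := hab
  have hdb : mlt d b := ⟨a, by rw [hd, MagnitudeSpace.add_comm']⟩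
  have hdA : d ∈ A := by
    by_contra hdA
    have hbd : mle b d := hbmin d hdA
    rcases MagnitudeSpace.trichotomy d b with ⟨_, _, h3⟩ | ⟨_, _, h3⟩ | ⟨h1, h2, _⟩
    · exact h3 hdb
    · exact h3 hdb
    · rcases hbd with h | h
      · exact h1 h
      · exact h2 h.symm
  have : b ∈ A := by
    have := hclosed d hdA
    rwa [MagnitudeSpace.add_comm', ← hd] at this
  exact hbA this
end

section
/- If M is a well ordered magnitude space with smallest element a, M' is any magnitude space, and a' ∈ M', then there exists a unique homomorphism φ : M → M' with φ(a) = a'. -/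
variable {M : Type*}

lemma no_self [MagnitudeSpace M] (b : M) : ¬ ∃ d : M, b = b + d := by
  rcases MagnitudeSpace.trichotomy b b with ⟨_, h, _⟩ | ⟨_, _, h⟩ | ⟨_, h, _⟩
  · exact absurd rfl h
  · exact h
  · exact absurd rfl h

lemma nsm_add_nsm [MagnitudeSpace M] (a : M) (n k : ℕ) :
    nsm (n + k + 1) a = nsm n a + nsm k a := by
  induction k with
  | zero => rfl
  | succ k ih =>
    show nsm (n + k + 1) a + a = nsm n a + (nsm k a + a)
    rw [ih, MagnitudeSpace.add_assoc']

lemma nsm_inj [MagnitudeSpace M] (a : M) {n m : ℕ} (h : nsm n a = nsm m a) : n = m := by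
  rcases Nat.lt_trichotomy n m with hlt | he | hlt
  · exfalso
    obtain ⟨k, hk⟩ := Nat.exists_eq_add_of_lt hlt
    rw [hk, nsm_add_nsm] at h
    exact no_self (nsm n a) ⟨nsm k a, h⟩
  · exact he
  · exfalso
    obtain ⟨k, hk⟩ := Nat.exists_eq_add_of_lt hlt
    rw [hk, nsm_add_nsm] at h
    exact no_self (nsm m a) ⟨nsm k a, h.symm⟩

lemma nsm_surj [MagnitudeSpace M]
    (hwo : ∀ A : Set M, A.Nonempty → ∃ b ∈ A, ∀ x ∈ A, mle b x)
    (a : M) (ha : ∀ x : M, mle a x) (x : M) : ∃ n, x = nsm n a := by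
  by_contra hx
  push_neg at hx
  obtain ⟨b, hbA, hbmin⟩ := hwo {x | ∀ n, x ≠ nsm n a} ⟨x, hx⟩
  have hba : b ≠ a := fun h => hbA 0 h
  obtain ⟨d, hd⟩ : mlt a b := by
    rcases ha b with h | h
    · exact h
    · exact absurd h.symm hba
  have hdb : d ≠ b := by
    intro h
    rw [h, MagnitudeSpace.add_comm'] at hd
    exact no_self b ⟨a, hd⟩
  have hdA : d ∉ {x | ∀ n, x ≠ nsm n a} := by
    intro hdA
    rcases hbmin d hdA with ⟨e, he⟩ | he
    · rw [he, MagnitudeSpace.add_comm', ← MagnitudeSpace.add_assoc'] at hd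
      exact no_self b ⟨e + a, hd⟩
    · exact hdb he.symm
  simp only [Set.mem_setOf_eq, not_forall, not_ne_iff] at hdA
  obtain ⟨n, hn⟩ := hdA
  exact hbA (n + 1) (by rw [hd, hn, MagnitudeSpace.add_comm']; rfl)

theorem stmt_11 {M' : Type*} [MagnitudeSpace M] [MagnitudeSpace M']
    (hwo : ∀ A : Set M, A.Nonempty → ∃ b ∈ A, ∀ x ∈ A, mle b x)
    (a : M) (ha : ∀ x : M, mle a x) (a' : M') :
    ∃! φ : M → M', (∀ x y : M, φ (x + y) = φ x + φ y) ∧ φ a = a' := by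
  classical
  have surj := nsm_surj hwo a ha
  set φ : M → M' := fun x => nsm (Classical.choose (surj x)) a' with hφ
  have key : ∀ (x : M) (n : ℕ), x = nsm n a → φ x = nsm n a' := by
    intro x n hx
    have hs := Classical.choose_spec (surj x)
    have : Classical.choose (surj x) = n := nsm_inj a (hs ▸ hx)
    simp [hφ, this]
  refine ⟨φ, ⟨?_, ?_⟩, ?_⟩
  · intro x y
    obtain ⟨n, hn⟩ := surj x
    obtain ⟨m, hm⟩ := surj y
    have hxy : x + y = nsm (n + m + 1) a := by rw [hn, hm, nsm_add_nsm]
    rw [key _ _ hxy, key _ _ hn, key _ _ hm, nsm_add_nsm]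
  · exact key a 0 rfl
  · intro ψ ⟨hadd, hmap⟩
    have hψ : ∀ n : ℕ, ψ (nsm n a) = nsm n a' := by
      intro n
      induction n with
      | zero => exact hmap
      | succ n ih => show ψ (nsm n a + a) = nsm n a' + a'; rw [hadd, ih, hmap]
    funext x
    obtain ⟨n, hn⟩ := surj x
    rw [hn, hψ n]; exact (key _ n rfl).symm
end

section
/- Any two well ordered magnitude spaces are isomorphic: there is a bijective homomorphism between them. -/
variable {M : Type*}

lemma mlt_asymm [MagnitudeSpace M] {a b : M} (h1 : mlt a b) (h2 : mlt b a) : False := by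
  rcases MagnitudeSpace.trichotomy a b with ⟨_, _, h⟩ | ⟨_, _, h⟩ | ⟨h, _, _⟩
  · exact h h1
  · exact h h1
  · exact h h2

lemma nsm_add [MagnitudeSpace M] (a : M) (n m : ℕ) :
    nsm (n + m + 1) a = nsm n a + nsm m a := by
  induction m with
  | zero => rfl
  | succ m ih =>
    have h : n + (m + 1) + 1 = (n + m + 1) + 1 := by omega
    rw [h]
    show nsm (n + m + 1) a + a = nsm n a + nsm (m + 1) a
    rw [ih]
    show nsm n a + nsm m a + a = nsm n a + (nsm m a + a)
    exact (MagnitudeSpace.add_assoc' _ _ _).symm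

lemma exists_bij [MagnitudeSpace M]
    (hwo : ∀ A : Set M, A.Nonempty → ∃ b ∈ A, ∀ x ∈ A, mle b x) :
    ∃ ψ : ℕ → M, (∀ n m, ψ (n + m + 1) = ψ n + ψ m) ∧ Function.Bijective ψ := by
  obtain ⟨e, -, he⟩ := hwo Set.univ ⟨Classical.choice MagnitudeSpace.nonempty, trivial⟩
  refine ⟨fun n => nsm n e, fun n m => nsm_add e n m, ?_, ?_⟩
  · -- injective
    have hmono : ∀ {n m : ℕ}, n < m → mlt (nsm n e) (nsm m e) := by
      intro n m hnm
      obtain ⟨k, hk⟩ : ∃ k, m = n + k + 1 := ⟨m - n - 1, by omega⟩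
      exact ⟨nsm k e, by rw [hk, nsm_add]⟩
    intro n m h
    simp only at h
    rcases Nat.lt_trichotomy n m with hlt | heq | hlt
    · exact absurd (h ▸ hmono hlt) (mlt_irrefl _)
    · exact heq
    · exact absurd (h ▸ hmono hlt) (mlt_irrefl _)
  · -- surjective
    rw [Function.Surjective] at *
    by_contra h
    push_neg at h
    obtain ⟨x, hx⟩ := h
    obtain ⟨b, hbA, hb⟩ := hwo {x | ∀ n, nsm n e ≠ x} ⟨x, fun n => hx n⟩
    have heb : mlt e b := by
      rcases he b trivial with h' | h'
      · exact h'
      · exact absurd h' (hbA 0)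
    obtain ⟨d, hd⟩ := heb
    have hdb : mlt d b := ⟨e, by rw [hd, MagnitudeSpace.add_comm']⟩
    have hdA : d ∉ {x : M | ∀ n, nsm n e ≠ x} := by
      intro hmem
      rcases hb d hmem with h' | h'
      · exact mlt_asymm hdb h'
      · exact mlt_irrefl d (h' ▸ hdb)
    simp only [Set.mem_setOf_eq, not_forall, not_not] at hdA
    obtain ⟨n, hn⟩ := hdA
    exact hbA (n + 1) (by show nsm n e + e = b; rw [hn, ← MagnitudeSpace.add_comm', hd])

theorem stmt_12 {M' : Type*} [MagnitudeSpace M] [MagnitudeSpace M']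
    (hwo : ∀ A : Set M, A.Nonempty → ∃ b ∈ A, ∀ x ∈ A, mle b x)
    (hwo' : ∀ A : Set M', A.Nonempty → ∃ b ∈ A, ∀ x ∈ A, mle b x) :
    ∃ φ : M → M', (∀ x y : M, φ (x + y) = φ x + φ y) ∧ Function.Bijective φ := by
  obtain ⟨ψ, hψ, hb⟩ := exists_bij hwo
  obtain ⟨ψ', hψ', hb'⟩ := exists_bij hwo'
  let E : ℕ ≃ M := Equiv.ofBijective ψ hb
  refine ⟨ψ' ∘ E.symm, ?_, hb'.comp E.symm.bijective⟩
  intro x y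
  have hx : ψ (E.symm x) = x := E.apply_symm_apply x
  have hy : ψ (E.symm y) = y := E.apply_symm_apply y
  have key : E.symm (x + y) = E.symm x + E.symm y + 1 := by
    rw [Equiv.symm_apply_eq]
    show x + y = ψ (E.symm x + E.symm y + 1)
    rw [hψ, hx, hy]
  simp only [Function.comp_apply, key, hψ']
end

section
/- In an Archimedean magnitude space, for any elements a and b there exists a positive natural number n with n•a > b. -/
variable {M : Type*}

theorem stmt_14 [MagnitudeSpace M]
    (harch : ∀ (a : M) (A : Set M), A.Nonempty → (∃ u : M, ∀ x ∈ A, mle x u) →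
      ∃ ζ ∈ A, ζ + a ∉ A) :
    ∀ a b : M, ∃ n : ℕ, mlt b (nsm n a) := by
  intro a b
  by_contra h
  push_neg at h
  set A : Set M := Set.range (fun n => nsm n a) with hA
  have hne : A.Nonempty := ⟨nsm 0 a, 0, rfl⟩
  have hub : ∃ u : M, ∀ x ∈ A, mle x u := by
    refine ⟨b, ?_⟩
    rintro x ⟨n, rfl⟩
    rcases MagnitudeSpace.trichotomy (nsm n a) b with ⟨h1, _, _⟩ | ⟨_, h2, _⟩ | ⟨_, _, h3⟩
    · exact absurd h1 (h n)
    · exact Or.inr h2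
    · exact Or.inl h3
  obtain ⟨ζ, ⟨n, hn⟩, hnot⟩ := harch a A hne hub
  exact hnot ⟨n + 1, by simp [nsm, hn]⟩
end
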